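/- arXiv:2206.05070 — 2 statements merged into one kernel-verified Lean document; each statement's English description precedes it below -/
import Mathlib

section
/- Let i₁ < i₂ < ... < i_k be a strictly increasing finite sequence of natural numbers, regarded as a set M of reals. For real x, define G(x) = re( H(x) + Σ_{j=1}^{k−1} re( (i_{j+1} − i_j)/2 − ( re(x − (i_j + i_{j+1})/2) + re((i_j + i_{j+1})/2 − x) ) ) ), where H(x) = re(re(x − i_k) − re(x − (i_k + 1)) + re(i₁ − x) + re((i₁ − 1) − x)). Then G(x) = 0 if and only if x ∈ M, and G(x) ≥ 0 for all x. -/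
noncomputable def re (t : ℝ) : ℝ := max 0 t

lemma re_nonneg (t : ℝ) : 0 ≤ re t := le_max_left _ _

lemma re_of_nonneg {t : ℝ} (h : 0 ≤ t) : re t = t := max_eq_right h

lemma re_eq_zero {t : ℝ} : re t = 0 ↔ t ≤ 0 := by
  simp [re, max_eq_left_iff]

lemma B_nonneg (a x : ℝ) : 0 ≤ re (x - a) - re (x - (a + 1)) := by
  have : re (x - (a + 1)) ≤ re (x - a) :=
    max_le_max le_rfl (by linarith)
  linarith

lemma B_zero (a x : ℝ) : re (x - a) - re (x - (a + 1)) = 0 ↔ x ≤ a := by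
  unfold re
  rcases le_total x a with h | h
  · rw [max_eq_left (by linarith), max_eq_left (by linarith)]
    simp [h]
  · rw [max_eq_right (by linarith)]
    rcases le_total x (a + 1) with h2 | h2
    · rw [max_eq_left (by linarith)]
      constructor <;> intro h3 <;> linarith
    · rw [max_eq_right (by linarith)]
      constructor <;> intro h3 <;> linarith

lemma term_zero (p q x : ℝ) (hpq : p < q) :
    re ((q - p) / 2 - (re (x - (p + q) / 2) + re ((p + q) / 2 - x))) = 0 ↔
      x ≤ p ∨ q ≤ x := by
  rw [re_eq_zero]
  unfold re
  rcases le_total x ((p + q) / 2) with h | h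
  · rw [max_eq_left (by linarith), max_eq_right (by linarith)]
    constructor
    · intro h2; left; linarith
    · rintro (h2 | h2) <;> linarith
  · rw [max_eq_right (by linarith), max_eq_left (by linarith)]
    constructor
    · intro h2; right; linarith
    · rintro (h2 | h2) <;> linarith

theorem finite_set_membership_gadget (k : ℕ) (hk : 1 ≤ k) (i : ℕ → ℕ)
    (hmono : ∀ j, j + 1 < k → i j < i (j + 1)) (x : ℝ) :
    (re (re (re (x - (i (k - 1) : ℝ)) - re (x - ((i (k - 1) : ℝ) + 1)) +
          re ((i 0 : ℝ) - x) + re (((i 0 : ℝ) - 1) - x)) +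
        ∑ j ∈ Finset.range (k - 1),
          re (((i (j + 1) : ℝ) - (i j : ℝ)) / 2 -
            (re (x - ((i j : ℝ) + (i (j + 1) : ℝ)) / 2) +
             re (((i j : ℝ) + (i (j + 1) : ℝ)) / 2 - x)))) = 0 ↔
      ∃ j < k, x = (i j : ℝ)) ∧
    0 ≤ re (re (re (x - (i (k - 1) : ℝ)) - re (x - ((i (k - 1) : ℝ) + 1)) +
          re ((i 0 : ℝ) - x) + re (((i 0 : ℝ) - 1) - x)) +
        ∑ j ∈ Finset.range (k - 1),
          re (((i (j + 1) : ℝ) - (i j : ℝ)) / 2 -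
            (re (x - ((i j : ℝ) + (i (j + 1) : ℝ)) / 2) +
             re (((i j : ℝ) + (i (j + 1) : ℝ)) / 2 - x)))) := by
  classical
  have mono : ∀ b, b < k → ∀ a, a ≤ b → i a ≤ i b := by
    intro b
    induction b with
    | zero => intro _ a ha; rw [Nat.le_zero.mp ha]
    | succ n ih =>
      intro hb a ha
      rcases Nat.lt_succ_iff_lt_or_eq.mp (Nat.lt_succ_of_le ha) with h | h
      · exact le_of_lt (lt_of_le_of_lt (ih (by omega) a (by omega)) (hmono n hb))
      · subst h; exact le_rfl
  set A : ℝ := re (x - (i (k - 1) : ℝ)) - re (x - ((i (k - 1) : ℝ) + 1)) +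
      re ((i 0 : ℝ) - x) + re (((i 0 : ℝ) - 1) - x) with hAdef
  set f : ℕ → ℝ := fun j =>
    re (((i (j + 1) : ℝ) - (i j : ℝ)) / 2 -
      (re (x - ((i j : ℝ) + (i (j + 1) : ℝ)) / 2) +
       re (((i j : ℝ) + (i (j + 1) : ℝ)) / 2 - x))) with hfdef
  have hA0 : 0 ≤ A := by
    have := B_nonneg ((i (k - 1) : ℝ)) x
    have := re_nonneg ((i 0 : ℝ) - x)
    have := re_nonneg (((i 0 : ℝ) - 1) - x)
    rw [hAdef]; linarith
  have hsum0 : 0 ≤ ∑ j ∈ Finset.range (k - 1), f j :=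
    Finset.sum_nonneg fun j _ => re_nonneg _
  have hS0 : 0 ≤ re A + ∑ j ∈ Finset.range (k - 1), f j :=
    add_nonneg (re_nonneg _) hsum0
  refine ⟨?_, re_nonneg _⟩
  rw [re_of_nonneg hS0, re_of_nonneg hA0]
  rw [add_eq_zero_iff_of_nonneg hA0 hsum0,
    Finset.sum_eq_zero_iff_of_nonneg (fun j _ => re_nonneg _)]
  have hAiff : A = 0 ↔ (i 0 : ℝ) ≤ x ∧ x ≤ (i (k - 1) : ℝ) := by
    rw [hAdef]
    have h1 := B_nonneg ((i (k - 1) : ℝ)) x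
    have h2 := re_nonneg ((i 0 : ℝ) - x)
    have h3 := re_nonneg (((i 0 : ℝ) - 1) - x)
    constructor
    · intro h
      have hb : re (x - (i (k - 1) : ℝ)) - re (x - ((i (k - 1) : ℝ) + 1)) = 0 := by linarith
      have hc : re ((i 0 : ℝ) - x) = 0 := by linarith
      exact ⟨by have := re_eq_zero.mp hc; linarith, (B_zero _ _).mp hb⟩
    · rintro ⟨hl, hr⟩
      have hb := (B_zero ((i (k - 1) : ℝ)) x).mpr hr
      have hc : re ((i 0 : ℝ) - x) = 0 := re_eq_zero.mpr (by linarith)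
      have hd : re (((i 0 : ℝ) - 1) - x) = 0 := re_eq_zero.mpr (by linarith)
      linarith
  have hfiff : ∀ j, j < k - 1 → (f j = 0 ↔ x ≤ (i j : ℝ) ∨ (i (j + 1) : ℝ) ≤ x) := by
    intro j hj
    have hlt : (i j : ℝ) < (i (j + 1) : ℝ) := by
      exact_mod_cast hmono j (by omega)
    exact term_zero (i j : ℝ) (i (j + 1) : ℝ) x hlt
  constructor
  · rintro ⟨hA, hf⟩
    obtain ⟨hl, hr⟩ := hAiff.mp hA
    set P : ℕ → Prop := fun j => (i j : ℝ) ≤ x with hP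
    set j0 := Nat.findGreatest P (k - 1) with hj0
    have hj0le : j0 ≤ k - 1 := Nat.findGreatest_le _
    have hPj0 : P j0 := Nat.findGreatest_spec (Nat.zero_le _) hl
    refine ⟨j0, by omega, ?_⟩
    rcases eq_or_lt_of_le hj0le with heq | hlt
    · rw [heq]; linarith [hPj0, heq ▸ hPj0]
    · have := hfiff j0 hlt
      rcases (this.mp (hf j0 (Finset.mem_range.mpr hlt))) with h | h
      · exact le_antisymm h hPj0
      · have hng : ¬ P (j0 + 1) := Nat.findGreatest_is_greatest (k := j0 + 1) (by rw [← hj0]; omega) (by omega)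
        exact absurd h hng
  · rintro ⟨j, hjk, rfl⟩
    constructor
    · exact hAiff.mpr ⟨by exact_mod_cast mono j hjk 0 (Nat.zero_le _),
        by exact_mod_cast mono (k - 1) (by omega) j (by omega)⟩
    · intro j' hj'
      rw [Finset.mem_range] at hj'
      rw [hfiff j' hj']
      rcases le_or_gt j j' with h | h
      · exact Or.inl (by exact_mod_cast mono j' (by omega) j h)
      · exact Or.inr (by exact_mod_cast mono j (by omega) (j' + 1) (by omega))
end

section
/- Let N be a node-classifier message passing neural network with k layers, where layer i updates each node label by x_v^i = N_i(x_v^{i−1}, Σ_{v' ∈ Neigh(v)} x_{v'}^{i−1}) and the output is N(G, v) = N_r(x_v^k). Let G be a graph with node w, and let B be the tree-unraveling of G at w to depth k with root (w, w), labels L_B(v, p) = L(v). Then for all j ≤ k and all unraveling nodes (v, p) at depth k − i with i ≥ j, the layer-j label of (v, p) in B equals the layer-j label of v in G; in particular N(B, (w, w)) = N(G, w). -/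
/-- No immediate backtracking in a walk: `v_{j-1} ≠ v_{j+1}`. -/
def NoBacktrack {V : Type*} : List V → Prop
  | a :: b :: c :: rest => a ≠ c ∧ NoBacktrack (b :: c :: rest)
  | _ => True

/-- A straight path from `w`: a nonempty walk starting at `w`, with consecutive
vertices adjacent and no immediate backtracking. -/
def IsStraight {V : Type*} (adj : V → V → Prop) (w : V) (p : List V) : Prop :=
  p.head? = some w ∧ p.Chain' adj ∧ NoBacktrack p

/-- Layer-`j` labels of the MPNN on the graph given by the neighbourhood
function `neigh` and labeling `L`:
`x_v^0 = L v`, `x_v^{j+1} = N_{j+1}(x_v^j, Σ_{u ∈ neigh v} x_u^j)`. -/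
noncomputable def mpnnG {V : Type*} {n : ℕ}
    (Ncomb : ℕ → (Fin n → ℝ) → (Fin n → ℝ) → (Fin n → ℝ))
    (neigh : V → Finset V) (L : V → Fin n → ℝ) : ℕ → V → Fin n → ℝ
  | 0 => L
  | j + 1 => fun v =>
      Ncomb (j + 1) (mpnnG Ncomb neigh L j v) (∑ u ∈ neigh v, mpnnG Ncomb neigh L j u)

/-- Children of an unraveling node `p` (a straight path of the graph from `w`,
of length at most `k`): extensions `p ++ [v]` with `v` adjacent to the last
vertex of `p`, without immediate backtracking, within depth `k`. -/
def childSet {V : Type*} [DecidableEq V] (neigh : V → Finset V) (w : V) (k : ℕ)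
    (p : List V) : Finset V :=
  if p.length ≤ k then (neigh (p.getLastD w)).filter (fun v => p.dropLast.getLast? ≠ some v)
  else ∅

/-- Layer-`j` labels of the MPNN on the tree-unraveling at `w` to depth `k`:
an unraveling node is a straight path `p` (representing `(v, p)` with `v` its
last vertex); its label is `L v`, and its neighbours are its parent
`p.dropLast` (if any) and its children. -/
noncomputable def mpnnB {V : Type*} [DecidableEq V] {n : ℕ}
    (Ncomb : ℕ → (Fin n → ℝ) → (Fin n → ℝ) → (Fin n → ℝ))
    (neigh : V → Finset V) (L : V → Fin n → ℝ) (w : V) (k : ℕ) :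
    ℕ → List V → Fin n → ℝ
  | 0, p => L (p.getLastD w)
  | j + 1, p =>
      Ncomb (j + 1) (mpnnB Ncomb neigh L w k j p)
        ((if 2 ≤ p.length then mpnnB Ncomb neigh L w k j p.dropLast else 0) +
          ∑ v ∈ childSet neigh w k p, mpnnB Ncomb neigh L w k j (p ++ [v]))

/-!
Induction on the layer `j`. For a straight path `p` ending in `v` with predecessor `u`, the
unraveling neighbours of `p` are its parent (ending in `u`) and the children `p ++ [x]` for
`x ∈ neigh v`, `x ≠ u`; by symmetry `u ∈ neigh v`, so their last vertices run through `neigh v`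
exactly once and the aggregated messages agree. The bound `p.length + j ≤ k + 1` guarantees that
every path reached during the `j` rounds has depth at most `k`, so no children are cut off.
-/

theorem List.exists_eq_append_pair {α : Type*} {p : List α} (hp : 2 ≤ p.length) :
    ∃ q u v, p = q ++ [u, v] := by
  rcases p.eq_nil_or_concat' with rfl | ⟨l, v, rfl⟩
  · simp at hp
  rcases l.eq_nil_or_concat' with rfl | ⟨q, u, rfl⟩
  · simp at hp
  exact ⟨q, u, v, by simp⟩

namespace NoBacktrack

variable {V : Type*}

theorem dropLast : ∀ {p : List V}, NoBacktrack p → NoBacktrack p.dropLast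
  | [], _ | [_], _ | [_, _], _ | [_, _, _], _ => trivial
  | _ :: b :: c :: d :: rest, h => ⟨h.1, dropLast (p := b :: c :: d :: rest) h.2⟩

theorem append_singleton {x : V} : ∀ {p : List V}, NoBacktrack p →
    p.dropLast.getLast? ≠ some x → NoBacktrack (p ++ [x])
  | [], _, _ | [_], _, _ => trivial
  | [_, _], _, hx => ⟨by simpa using hx, trivial⟩
  | _ :: b :: c :: rest, h, hx =>
    ⟨h.1, append_singleton (p := b :: c :: rest) h.2 (by simpa [List.getLast?_cons] using hx)⟩

end NoBacktrack

namespace IsStraight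

variable {V : Type*} {adj : V → V → Prop} {w : V} {p : List V}

theorem singleton : IsStraight adj w [w] :=
  ⟨rfl, List.isChain_singleton w, trivial⟩

theorem isChain (hp : IsStraight adj w p) : p.IsChain adj :=
  hp.2.1

theorem ne_nil (hp : IsStraight adj w p) : p ≠ [] := by
  rintro rfl
  cases hp.1

theorem dropLast (hp : IsStraight adj w p) (hlen : 2 ≤ p.length) :
    IsStraight adj w p.dropLast := by
  obtain ⟨q, u, v, rfl⟩ := List.exists_eq_append_pair hlen
  refine ⟨?_, hp.isChain.prefix (List.dropLast_prefix _), hp.2.2.dropLast⟩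
  simpa [List.head?_append] using hp.1

theorem adj_getLastD_dropLast (hp : IsStraight adj w p) (hlen : 2 ≤ p.length) :
    adj (p.dropLast.getLastD w) (p.getLastD w) := by
  obtain ⟨q, u, v, rfl⟩ := List.exists_eq_append_pair hlen
  have hchain := hp.isChain
  rw [show q ++ [u, v] = (q ++ [u]) ++ [v] by simp, List.isChain_append] at hchain
  simpa using hchain.2.2 u (by simp) v (by simp)

theorem append_singleton (hp : IsStraight adj w p) {x : V} (hadj : adj (p.getLastD w) x)
    (hback : p.dropLast.getLast? ≠ some x) : IsStraight adj w (p ++ [x]) := by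
  refine ⟨?_, ?_, hp.2.2.append_singleton hback⟩
  · rw [List.head?_append, hp.1]
    rfl
  · change List.IsChain adj (p ++ [x])
    rw [List.isChain_append]
    refine ⟨hp.isChain, List.isChain_singleton x, fun y hy z hz => ?_⟩
    rw [List.getLast?_eq_some_getLast hp.ne_nil] at hy
    simp only [Option.mem_def, Option.some.injEq, List.head?_cons] at hy hz
    subst hy hz
    simpa [List.getLastD_eq_getLast?, List.getLast?_eq_some_getLast hp.ne_nil] using hadj

end IsStraight

section Unraveling

variable {V : Type*} [DecidableEq V] {neigh : V → Finset V} {w : V} {k : ℕ} {p : List V}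

theorem sum_parent_add_sum_childSet {M : Type*} [AddCommMonoid M] (f : V → M)
    (hsym : ∀ u v, u ∈ neigh v ↔ v ∈ neigh u)
    (hp : IsStraight (fun a b => b ∈ neigh a) w p) (hlen : p.length ≤ k) :
    ((if 2 ≤ p.length then f (p.dropLast.getLastD w) else 0) +
        ∑ v ∈ childSet neigh w k p, f v) = ∑ u ∈ neigh (p.getLastD w), f u := by
  rw [childSet, if_pos hlen]
  split_ifs with h2
  · obtain ⟨q, u, v, rfl⟩ := List.exists_eq_append_pair h2
    have hlast : (q ++ [u, v]).getLastD w = v := by simp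
    have hparent : (q ++ [u, v]).dropLast.getLastD w = u := by simp
    have hchildren : (neigh v).filter (fun x => (q ++ [u, v]).dropLast.getLast? ≠ some x) =
        (neigh v).erase u := by
      ext x
      simp [ne_comm, and_comm]
    have huv : u ∈ neigh v := (hsym u v).2 (by simpa using hp.adj_getLastD_dropLast h2)
    rw [hlast, hparent, hchildren, Finset.add_sum_erase _ f huv]
  · have hdrop : p.dropLast = [] := List.eq_nil_of_length_eq_zero (by simp; omega)
    simp [hdrop]

theorem mpnnB_eq_mpnnG {n : ℕ} (hsym : ∀ u v, u ∈ neigh v ↔ v ∈ neigh u)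
    (L : V → Fin n → ℝ) (Ncomb : ℕ → (Fin n → ℝ) → (Fin n → ℝ) → (Fin n → ℝ)) (j : ℕ)
    (hp : IsStraight (fun a b => b ∈ neigh a) w p) (hlen : p.length + j ≤ k + 1) :
    mpnnB Ncomb neigh L w k j p = mpnnG Ncomb neigh L j (p.getLastD w) := by
  induction j generalizing p with
  | zero => rfl
  | succ j ih =>
    have hchild : ∀ x ∈ childSet neigh w k p,
        mpnnB Ncomb neigh L w k j (p ++ [x]) = mpnnG Ncomb neigh L j x := fun x hx => by
      rw [childSet, if_pos (by omega), Finset.mem_filter] at hx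
      simpa using ih (hp.append_singleton hx.1 hx.2) (by simp; omega)
    have hparent : (if 2 ≤ p.length then mpnnB Ncomb neigh L w k j p.dropLast else 0) =
        if 2 ≤ p.length then mpnnG Ncomb neigh L j (p.dropLast.getLastD w) else 0 := by
      split_ifs with h2
      exacts [ih (hp.dropLast h2) (by simp; omega), rfl]
    rw [mpnnB, mpnnG, ih hp (by omega), hparent, Finset.sum_congr rfl hchild,
      sum_parent_add_sum_childSet _ hsym hp (by omega)]

end Unraveling

/-- For a node-classifier MPNN with `k` layers, the layer-`j` label of any
unraveling node `(v, p)` of depth `≤ k - j` equals the layer-`j` label of `v`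
in the original graph; in particular the MPNN output at the root of the
tree-unraveling equals the output at `w` in the graph. -/
theorem unraveling_preserves_mpnn {V : Type*} [DecidableEq V] {n q : ℕ}
    (neigh : V → Finset V) (hsym : ∀ u v, u ∈ neigh v ↔ v ∈ neigh u)
    (L : V → Fin n → ℝ)
    (Ncomb : ℕ → (Fin n → ℝ) → (Fin n → ℝ) → (Fin n → ℝ))
    (Nr : (Fin n → ℝ) → Fin q → ℝ) (k : ℕ) (w : V) :
    (∀ j (p : List V), IsStraight (fun a b => b ∈ neigh a) w p →
        p.length + j ≤ k + 1 →
        mpnnB Ncomb neigh L w k j p = mpnnG Ncomb neigh L j (p.getLastD w)) ∧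
    Nr (mpnnB Ncomb neigh L w k k [w]) = Nr (mpnnG Ncomb neigh L k w) :=
  ⟨fun j _ hp hlen => mpnnB_eq_mpnnG hsym L Ncomb j hp hlen,
    congrArg Nr (mpnnB_eq_mpnnG hsym L Ncomb k IsStraight.singleton (by simp [add_comm]))⟩
end
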